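/- A permutation w ∈ S_n is join-irreducible in the middle order P_n (covers exactly one element) if and only if its inversion sequence I(w) has exactly one nonzero entry; equivalently, w in one-line notation equals 1 2 ... i j (i+1) (i+2) ... (j−1) (j+1) ... n for some 0 ≤ i ≤ n−2 and i+2 ≤ j ≤ n, i.e., w is a single cycle (j, j−1, ..., i+1) of size at least 2 on consecutive values. -/

import Mathlib

/-- The inversion sequence of a permutation `w` of `Fin n` (0-indexed values):
`invSeq w i` counts the values `j < i` appearing after `i` in one-line notation. -/
def invSeq {n : ℕ} (w : Equiv.Perm (Fin n)) (i : Fin n) : ℕ :=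
  (Finset.univ.filter (fun j : Fin n => j < i ∧ w.symm i < w.symm j)).card

/-- The middle order on permutations: coordinate-wise comparison of inversion sequences. -/
def midLe {n : ℕ} (v w : Equiv.Perm (Fin n)) : Prop :=
  ∀ i, invSeq v i ≤ invSeq w i

/-- `v` is covered by `w` in the middle order. -/
def midCovBy {n : ℕ} (v w : Equiv.Perm (Fin n)) : Prop :=
  midLe v w ∧ v ≠ w ∧ ∀ u, midLe v u → midLe u w → u = v ∨ u = w

/-!
The inversion sequence is the Lehmer code: the inversion counts of `w⁻¹` on the prefixes
`{0, …, i}` recover the relative order of its values there, so `invSeq` is injective, and since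
both sides have `n!` elements it is a bijection onto the sequences with `I i ≤ i`. That image is
a down-set of `ℕⁿ`, so the middle order is the product order on it, and `v ⋖ w` exactly when
`I(v)` arises from `I(w)` by lowering one nonzero entry by one. Hence `w` covers exactly one
element iff `I(w)` has exactly one nonzero entry, say `m` at position `k`; this is the inversion
sequence of the inverse of the cycle `(k - m, …, k)`, i.e. of `(Fin.cycleIcc (k - m) k)⁻¹`.
-/

open Finset Function

section Inversions

variable {ι α β : Type*} [LinearOrder α] [LinearOrder β]

theorem lt_iff_card_filter_le_le_card_filter_lt (a : ι → α) (s : Finset ι) {x : ι} (hx : x ∈ s)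
    (y : ι) : a x < a y ↔ #{l ∈ s | a l ≤ a x} ≤ #{l ∈ s | a l < a y} := by
  refine ⟨fun hxy => card_le_card fun l hl => ?_, fun hcard => not_le.1 fun hyx => ?_⟩
  · simp only [mem_filter] at hl ⊢
    exact ⟨hl.1, hl.2.trans_lt hxy⟩
  · have hsub : {l ∈ s | a l < a y} ⊆ {l ∈ s | a l ≤ a x} := fun l hl => by
      simp only [mem_filter] at hl ⊢
      exact ⟨hl.1, hl.2.le.trans hyx⟩
    have hssub := (ssubset_iff_of_subset hsub).2 ⟨x, by simp [hx], by simp [hyx]⟩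
    exact (card_lt_card hssub).not_ge hcard

theorem card_filter_lt_add_card_filter_gt {a : ι → α} (ha : Injective a) (s : Finset ι) {i : ι}
    (hi : i ∉ s) : #{l ∈ s | a l < a i} + #{l ∈ s | a i < a l} = #s := by
  rw [← card_filter_add_card_filter_not (s := s) (fun l => a l < a i)]
  congr 2
  refine filter_congr fun l hl => ?_
  rw [not_lt, (ha.ne (ne_of_mem_of_not_mem hl hi)).symm.le_iff_lt]

variable [LinearOrder ι] [LocallyFiniteOrderBot ι]
  {a : ι → α} {b : ι → β}

theorem lt_iff_lt_of_card_inversions_eq_of_lt (ha : Injective a) (hb : Injective b) {i : ι}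
    (hi : #{l ∈ Iio i | a i < a l} = #{l ∈ Iio i | b i < b l})
    (hprefix : ∀ j < i, ∀ k < i, a j < a k ↔ b j < b k) {j : ι} (hj : j < i) :
    a j < a i ↔ b j < b i := by
  have hbelow : #{l ∈ Iio i | a l < a i} = #{l ∈ Iio i | b l < b i} := by
    have hA := card_filter_lt_add_card_filter_gt ha (Iio i) (notMem_Iio_self (b := i))
    have hB := card_filter_lt_add_card_filter_gt hb (Iio i) (notMem_Iio_self (b := i))
    omega
  have hle : #{l ∈ Iio i | a l ≤ a j} = #{l ∈ Iio i | b l ≤ b j} := by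
    refine congrArg card (filter_congr fun l hl => ?_)
    rw [← not_lt, ← not_lt, hprefix j hj l (mem_Iio.1 hl)]
  rw [lt_iff_card_filter_le_le_card_filter_lt a _ (mem_Iio.2 hj),
    lt_iff_card_filter_le_le_card_filter_lt b _ (mem_Iio.2 hj), hle, hbelow]

theorem lt_iff_lt_of_card_inversions_eq [WellFoundedLT ι] (ha : Injective a) (hb : Injective b)
    (h : ∀ i, #{l ∈ Iio i | a i < a l} = #{l ∈ Iio i | b i < b l}) (j k : ι) :
    a j < a k ↔ b j < b k := by
  suffices ∀ i, ∀ j ≤ i, ∀ k ≤ i, (a j < a k ↔ b j < b k) from this (max j k) j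
    (le_max_left j k) k (le_max_right j k)
  intro i
  induction i using WellFoundedLT.induction with
  | _ i ih =>
  have hprefix : ∀ j < i, ∀ k < i, a j < a k ↔ b j < b k := fun j hj k hk =>
    ih (max j k) (max_lt hj hk) j (le_max_left j k) k (le_max_right j k)
  intro j hj k hk
  rcases hj.lt_or_eq with hj | rfl <;> rcases hk.lt_or_eq with hk | rfl
  · exact hprefix j hj k hk
  · exact lt_iff_lt_of_card_inversions_eq_of_lt ha hb (h k) hprefix hj
  · rw [← not_iff_not, not_lt, not_lt, (ha.ne hk.ne).le_iff_lt, (hb.ne hk.ne).le_iff_lt]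
    exact lt_iff_lt_of_card_inversions_eq_of_lt ha hb (h j) hprefix hk
  · simp

end Inversions

section LehmerCode

variable {n : ℕ}

theorem invSeq_eq_card_filter_Iio (w : Equiv.Perm (Fin n)) (i : Fin n) :
    invSeq w i = #{j ∈ Iio i | w.symm i < w.symm j} := by
  simp only [invSeq]
  congr 1
  ext j
  simp

theorem invSeq_le (w : Equiv.Perm (Fin n)) (i : Fin n) : invSeq w i ≤ i := by
  rw [invSeq_eq_card_filter_Iio, ← Fin.card_Iio i]
  exact card_filter_le _ _

theorem invSeq_one : invSeq (1 : Equiv.Perm (Fin n)) = 0 := by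
  funext i
  rw [Pi.zero_apply, invSeq_eq_card_filter_Iio, card_eq_zero, filter_eq_empty_iff]
  intro j hj
  exact not_lt.2 (mem_Iio.1 hj).le

theorem invSeq_injective : Injective (invSeq (n := n)) := by
  intro v w h
  have horder := lt_iff_lt_of_card_inversions_eq v.symm.injective w.symm.injective fun i => by
    simpa only [invSeq_eq_card_filter_Iio] using congrFun h i
  have hmono : StrictMono (w.symm ∘ v) := fun x y hxy => by
    simpa using (horder (v x) (v y)).1 (by simpa using hxy)
  ext x
  exact congrArg _ (w.symm_apply_eq.1 hmono.apply_eq)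

theorem exists_invSeq_eq {f : Fin n → ℕ} (hf : ∀ i, f i ≤ i) : ∃ w, invSeq w = f := by
  let code (w : Equiv.Perm (Fin n)) (i : Fin n) : Fin (i + 1) :=
    ⟨invSeq w i, Nat.lt_succ_of_le (invSeq_le w i)⟩
  have hinj : Injective code := fun v w h => invSeq_injective <| funext fun i => by
    simpa [code] using congrFun h i
  have hcard : Fintype.card (Equiv.Perm (Fin n)) = Fintype.card (∀ i : Fin n, Fin (i + 1)) := by
    simp [Fintype.card_perm, Fin.prod_univ_eq_prod_range (· + 1), prod_range_add_one_eq_factorial]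
  obtain ⟨w, hw⟩ := ((Fintype.bijective_iff_injective_and_card code).2 ⟨hinj, hcard⟩).2
    fun i => ⟨f i, Nat.lt_succ_of_le (hf i)⟩
  exact ⟨w, funext fun i => by simpa [code] using congrFun hw i⟩

end LehmerCode

section Covers

variable {ι : Type*} [DecidableEq ι]

theorem covBy_iff_exists_eq_update_sub_one {f g : ι → ℕ} :
    f ⋖ g ↔ ∃ i, g i ≠ 0 ∧ f = update g i (g i - 1) := by
  simp only [Pi.covBy_iff_exists_left_eq, Nat.covBy_iff_add_one_eq]
  constructor
  · rintro ⟨i, x, hx, rfl⟩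
    exact ⟨i, by omega, by rw [show x = g i - 1 by omega]⟩
  · rintro ⟨i, hi, rfl⟩
    exact ⟨i, g i - 1, by omega, rfl⟩

theorem existsUnique_covBy_iff_card_filter_ne_zero [Fintype ι] {g : ι → ℕ} :
    (∃! f, f ⋖ g) ↔ #{i | g i ≠ 0} = 1 := by
  rw [← Fintype.existsUnique_iff_card_one]
  simp only [covBy_iff_exists_eq_update_sub_one]
  have hinj : ∀ i j, g i ≠ 0 → update g i (g i - 1) = update g j (g j - 1) → i = j := by
    intro i j hi h
    by_contra hij
    have := congrFun h i
    simp only [update_self, update_of_ne hij] at this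
    omega
  constructor
  · rintro ⟨_, ⟨i, hi, rfl⟩, huniq⟩
    exact ⟨i, hi, fun j hj => hinj j i hj (huniq _ ⟨j, hj, rfl⟩)⟩
  · rintro ⟨i, hi, huniq⟩
    exact ⟨_, ⟨i, hi, rfl⟩, fun f ⟨j, hj, hf⟩ => by rw [hf, huniq j hj]⟩

end Covers

section Support

variable {ι M : Type*} [Fintype ι] [DecidableEq ι] [Zero M] [DecidableEq M]

theorem card_filter_ne_zero_eq_one_iff {g : ι → M} :
    #{i | g i ≠ 0} = 1 ↔ ∃ k, g k ≠ 0 ∧ g = Pi.single k (g k) := by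
  rw [card_eq_one]
  constructor
  · rintro ⟨k, hk⟩
    have hsupp (i : ι) : g i ≠ 0 ↔ i = k := by simpa using Finset.ext_iff.1 hk i
    refine ⟨k, (hsupp k).2 rfl, funext fun i => ?_⟩
    rcases eq_or_ne i k with rfl | hik
    · rw [Pi.single_eq_same]
    · rw [Pi.single_eq_of_ne hik, ← not_ne_iff, hsupp]
      exact hik
  · rintro ⟨k, hk, hg⟩
    refine ⟨k, ext fun i => ?_⟩
    rcases eq_or_ne i k with rfl | hik
    · simpa using hk
    · rw [hg]
      simp [hik]

end Support

section MiddleOrder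

variable {n : ℕ} {v w : Equiv.Perm (Fin n)}

theorem exists_invSeq_eq_of_le {f : Fin n → ℕ} (h : f ≤ invSeq w) : ∃ v, invSeq v = f :=
  exists_invSeq_eq fun i => (h i).trans (invSeq_le w i)

theorem midCovBy_iff_invSeq_covBy : midCovBy v w ↔ invSeq v ⋖ invSeq w := by
  constructor
  · rintro ⟨hle, hne, hbetween⟩
    refine ⟨lt_of_le_of_ne hle (invSeq_injective.ne hne), fun f hvf hfw => ?_⟩
    obtain ⟨u, rfl⟩ := exists_invSeq_eq_of_le hfw.le
    rcases hbetween u hvf.le hfw.le with rfl | rfl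
    · exact hvf.ne rfl
    · exact hfw.ne rfl
  · intro h
    refine ⟨h.le, fun hvw => h.ne (congrArg invSeq hvw), fun u hvu huw => ?_⟩
    by_contra hne
    rw [not_or] at hne
    exact h.2 (lt_of_le_of_ne hvu (invSeq_injective.ne (Ne.symm hne.1)))
      (lt_of_le_of_ne huw (invSeq_injective.ne hne.2))

theorem existsUnique_midCovBy_iff : (∃! v, midCovBy v w) ↔ ∃! f, f ⋖ invSeq w := by
  simp only [midCovBy_iff_invSeq_covBy]
  constructor
  · rintro ⟨v, hv, huniq⟩
    refine ⟨invSeq v, hv, fun f hf => ?_⟩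
    obtain ⟨u, rfl⟩ := exists_invSeq_eq_of_le hf.le
    rw [huniq u hf]
  · rintro ⟨f, hf, huniq⟩
    obtain ⟨v, rfl⟩ := exists_invSeq_eq_of_le hf.le
    exact ⟨v, hf, fun u hu => invSeq_injective (huniq _ hu)⟩

theorem ne_one_and_existsUnique_midCovBy_iff :
    (w ≠ 1 ∧ ∃! v, midCovBy v w) ↔ #{i | invSeq w i ≠ 0} = 1 := by
  rw [existsUnique_midCovBy_iff, existsUnique_covBy_iff_card_filter_ne_zero]
  refine and_iff_right_of_imp fun h hw => ?_
  simp [hw, invSeq_one] at h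

end MiddleOrder

section Cycles

variable {n : ℕ} {a b : Fin n}

theorem val_cycleIcc (hab : a ≤ b) (k : Fin n) : (Fin.cycleIcc a b k : ℕ) =
    if (k : ℕ) < a then (k : ℕ) else if (k : ℕ) < b then k + 1 else if (k : ℕ) = b then a
    else k := by
  have := k.neZero
  rcases lt_or_ge k a with hka | hak
  · simp [Fin.cycleIcc_of_lt hka, Fin.lt_def.1 hka]
  rcases lt_or_ge b k with hbk | hkb
  · have := Fin.lt_def.1 hbk
    rw [Fin.cycleIcc_of_gt hbk]
    split_ifs <;> omega
  · have := Fin.le_def.1 hak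
    rw [Fin.cycleIcc_of_le_of_le hak hkb]
    rcases eq_or_ne k b with rfl | hkb'
    · simp [not_lt.2 this]
    · have := Fin.lt_def.1 (lt_of_le_of_ne hkb hkb')
      rw [if_neg hkb', Fin.val_add_one_of_lt' (by omega)]
      split_ifs <;> omega

theorem val_cycleIcc_symm (hab : a ≤ b) (p : Fin n) : ((Fin.cycleIcc a b).symm p : ℕ) =
    if (p : ℕ) < a then (p : ℕ) else if (p : ℕ) = a then b else if (p : ℕ) ≤ b then p - 1
    else p := by
  have h := congrArg Fin.val ((Fin.cycleIcc a b).apply_symm_apply p)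
  rw [val_cycleIcc hab] at h
  have := Fin.le_def.1 hab
  split_ifs at h ⊢ <;> omega

theorem invSeq_cycleIcc_symm (hab : a ≤ b) :
    invSeq (Fin.cycleIcc a b).symm = Pi.single b ((b : ℕ) - a) := by
  have := Fin.le_def.1 hab
  funext q
  rw [invSeq_eq_card_filter_Iio, Equiv.symm_symm]
  rcases eq_or_ne q b with rfl | hqb
  · rw [Pi.single_eq_same, ← Fin.card_Ico]
    congr 1
    ext p
    simp only [mem_filter, mem_Iio, mem_Ico, Fin.lt_def, Fin.le_def, val_cycleIcc hab]
    split_ifs <;> omega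
  · rw [Pi.single_eq_of_ne hqb, card_eq_zero, filter_eq_empty_iff]
    intro p hp
    have := Fin.val_ne_of_ne hqb
    rw [mem_Iio, Fin.lt_def] at hp
    rw [Fin.lt_def, val_cycleIcc hab, val_cycleIcc hab]
    split_ifs <;> omega

end Cycles

section SingleInversion

variable {n : ℕ} {w : Equiv.Perm (Fin n)}

theorem card_filter_invSeq_ne_zero_eq_one_iff :
    #{i | invSeq w i ≠ 0} = 1 ↔ ∃ a b : Fin n, a < b ∧ w = (Fin.cycleIcc a b).symm := by
  rw [card_filter_ne_zero_eq_one_iff]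
  constructor
  · rintro ⟨k, hk, hsingle⟩
    have hle := invSeq_le w k
    generalize invSeq w k = m at hk hsingle hle
    refine ⟨⟨k - m, by omega⟩, k, Fin.mk_lt_of_lt_val (by omega), invSeq_injective ?_⟩
    rw [invSeq_cycleIcc_symm (Fin.mk_le_of_le_val (by omega)), hsingle]
    congr 1
    simp only
    omega
  · rintro ⟨a, b, hab, rfl⟩
    have := Fin.lt_def.1 hab
    refine ⟨b, ?_, ?_⟩ <;> rw [invSeq_cycleIcc_symm hab.le, Pi.single_eq_same]
    omega

theorem exists_eq_cycleIcc_symm_iff :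
    (∃ a b : Fin n, a < b ∧ w = (Fin.cycleIcc a b).symm) ↔
      ∃ i j : ℕ, i + 2 ≤ j ∧ j ≤ n ∧
        ∀ p : Fin n, (w p : ℕ) =
          if (p : ℕ) < i then (p : ℕ)
          else if (p : ℕ) = i then j - 1
          else if (p : ℕ) ≤ j - 1 then (p : ℕ) - 1
          else (p : ℕ) := by
  constructor
  · rintro ⟨a, b, hab, rfl⟩
    refine ⟨a, b + 1, by have := Fin.lt_def.1 hab; omega, b.isLt, fun p => ?_⟩
    simp only [val_cycleIcc_symm hab.le, Nat.add_sub_cancel]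
  · rintro ⟨i, j, hij, hjn, hw⟩
    refine ⟨⟨i, by omega⟩, ⟨j - 1, by omega⟩, Fin.mk_lt_mk.2 (by omega), ?_⟩
    ext p
    rw [hw p, val_cycleIcc_symm (Fin.mk_le_mk.2 (by omega))]

end SingleInversion

/-- A permutation is join-irreducible in the middle order (non-minimum, covering exactly
one element) iff its inversion sequence has exactly one nonzero entry, iff in one-line
notation it is `1 2 ⋯ i j (i+1) (i+2) ⋯ (j-1) (j+1) ⋯ n` for some `0 ≤ i ≤ n-2` and
`i+2 ≤ j ≤ n` (here written 0-indexed). -/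
theorem middle_order_join_irreducibles (n : ℕ) (w : Equiv.Perm (Fin n)) :
    ((w ≠ 1 ∧ ∃! v, midCovBy v w) ↔
      (Finset.univ.filter (fun i : Fin n => invSeq w i ≠ 0)).card = 1) ∧
    ((w ≠ 1 ∧ ∃! v, midCovBy v w) ↔
      ∃ i j : ℕ, i + 2 ≤ j ∧ j ≤ n ∧
        ∀ p : Fin n, (w p : ℕ) =
          if (p : ℕ) < i then (p : ℕ)
          else if (p : ℕ) = i then j - 1
          else if (p : ℕ) ≤ j - 1 then (p : ℕ) - 1
          else (p : ℕ)) := by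
  have hcard := ne_one_and_existsUnique_midCovBy_iff (w := w)
  exact ⟨hcard, hcard.trans (card_filter_invSeq_ne_zero_eq_one_iff.trans
    exists_eq_cycleIcc_symm_iff)⟩
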